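/- For permutations u of {1,…,k} and v of {1,…,m}, the number of standard Rothe tableaux of the direct sum satisfies |SRT(u ⊕ v)| = C(ℓ(u)+ℓ(v), ℓ(u)) · |SRT(u)| · |SRT(v)|, where C denotes the binomial coefficient. -/

import Mathlib

/-- The Rothe diagram of a permutation of `{0, …, n-1}` (0-based indexing):
cell `(i,j)` belongs to the diagram iff `j < w i` and `i < w⁻¹ j`. -/
def rothe {n : ℕ} (w : Equiv.Perm (Fin n)) : Finset (Fin n × Fin n) :=
  Finset.univ.filter fun c => c.2 < w c.1 ∧ c.1 < w⁻¹ c.2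

/-- `ℓ(w)`: the number of inversions of `w`. -/
def plen {n : ℕ} (w : Equiv.Perm (Fin n)) : ℕ :=
  (Finset.univ.filter fun p : Fin n × Fin n => p.1 < p.2 ∧ w p.2 < w p.1).card

/-- A standard Rothe tableau of `w`: a labelling of the cells of the Rothe diagram by
`1, …, ℓ(w)` (bijectively), strictly increasing along rows and columns; the labelling
is recorded as a function on all of `Fin n × Fin n` that vanishes off the diagram. -/
def IsSRT {n : ℕ} (w : Equiv.Perm (Fin n)) (T : Fin n × Fin n → ℕ) : Prop :=
  Set.BijOn T ↑(rothe w) (Set.Icc 1 (plen w)) ∧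
  (∀ c, c ∉ rothe w → T c = 0) ∧
  (∀ c ∈ rothe w, ∀ c' ∈ rothe w, c.1 = c'.1 → c.2 < c'.2 → T c < T c') ∧
  (∀ c ∈ rothe w, ∀ c' ∈ rothe w, c.2 = c'.2 → c.1 < c'.1 → T c < T c')

noncomputable def srtCard {n : ℕ} (w : Equiv.Perm (Fin n)) : ℕ :=
  Nat.card {T : Fin n × Fin n → ℕ // IsSRT w T}

/-- The hook of a cell of the Rothe diagram. -/
def hook {n : ℕ} (w : Equiv.Perm (Fin n)) (c : Fin n × Fin n) : Finset (Fin n × Fin n) :=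
  (rothe w).filter fun d => (d.1 = c.1 ∧ c.2 ≤ d.2) ∨ (d.2 = c.2 ∧ c.1 ≤ d.1)

/-- A balanced Rothe tableau of `w`. -/
def IsBRT {n : ℕ} (w : Equiv.Perm (Fin n)) (T : Fin n × Fin n → ℕ) : Prop :=
  Set.BijOn T ↑(rothe w) (Set.Icc 1 (plen w)) ∧
  (∀ c, c ∉ rothe w → T c = 0) ∧
  ∀ c ∈ rothe w,
    ((hook w c).filter fun d => T d < T c).card
      = ((rothe w).filter fun d => d.1 = c.1 ∧ c.2 < d.2).card

noncomputable def brtCard {n : ℕ} (w : Equiv.Perm (Fin n)) : ℕ :=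
  Nat.card {T : Fin n × Fin n → ℕ // IsBRT w T}

/-- `w` contains the pattern `p`. -/
def ContainsPattern {n k : ℕ} (w : Equiv.Perm (Fin n)) (p : Equiv.Perm (Fin k)) : Prop :=
  ∃ f : Fin k → Fin n, StrictMono f ∧ ∀ s t : Fin k, w (f s) < w (f t) ↔ p s < p t

/-- The pattern 2413 (0-based one-line notation `1 3 0 2`). -/
def p2413 : Equiv.Perm (Fin 4) :=
  ⟨![1,3,0,2], ![2,0,3,1], by intro x; fin_cases x <;> rfl, by intro x; fin_cases x <;> rfl⟩

def p2431 : Equiv.Perm (Fin 4) :=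
  ⟨![1,3,2,0], ![3,0,2,1], by intro x; fin_cases x <;> rfl, by intro x; fin_cases x <;> rfl⟩

def p3142 : Equiv.Perm (Fin 4) :=
  ⟨![2,0,3,1], ![1,3,0,2], by intro x; fin_cases x <;> rfl, by intro x; fin_cases x <;> rfl⟩

def p4132 : Equiv.Perm (Fin 4) :=
  ⟨![3,0,2,1], ![1,3,2,0], by intro x; fin_cases x <;> rfl, by intro x; fin_cases x <;> rfl⟩

def p4213 : Equiv.Perm (Fin 4) :=
  ⟨![3,1,0,2], ![2,1,3,0], by intro x; fin_cases x <;> rfl, by intro x; fin_cases x <;> rfl⟩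

def p3241 : Equiv.Perm (Fin 4) :=
  ⟨![2,1,3,0], ![3,1,0,2], by intro x; fin_cases x <;> rfl, by intro x; fin_cases x <;> rfl⟩

def p132 : Equiv.Perm (Fin 3) :=
  ⟨![0,2,1], ![0,2,1], by intro x; fin_cases x <;> rfl, by intro x; fin_cases x <;> rfl⟩

/-- The adjacent transposition `s_a` (0-based: swaps `a` and `a+1`), as a permutation
of `Fin n`; it is the identity when `a+1 ≥ n`. -/
def adjT (n a : ℕ) : Equiv.Perm (Fin n) :=
  if h : a + 1 < n then Equiv.swap ⟨a, Nat.lt_of_succ_lt h⟩ ⟨a + 1, h⟩ else 1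

/-- Reduced words of `w`, written with 0-based letters `a` (`0 ≤ a ≤ n-2`). -/
def IsReducedWord {n : ℕ} (w : Equiv.Perm (Fin n)) (L : List ℕ) : Prop :=
  (∀ a ∈ L, a + 1 < n) ∧ (L.map (adjT n)).prod = w ∧ L.length = plen w

noncomputable def rwCard {n : ℕ} (w : Equiv.Perm (Fin n)) : ℕ :=
  Nat.card {L : List ℕ // IsReducedWord w L}

/-- Direct sum of two permutations. -/
def dsum {k m : ℕ} (u : Equiv.Perm (Fin k)) (v : Equiv.Perm (Fin m)) :
    Equiv.Perm (Fin (k + m)) :=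
  finSumFinEquiv.permCongr (Equiv.sumCongr u v)

def dsumSig (p q : Σ m : ℕ, Equiv.Perm (Fin m)) : Σ m : ℕ, Equiv.Perm (Fin m) :=
  ⟨p.1 + q.1, dsum p.2 q.2⟩

/-- The direct sum `w¹ ⊕ w² ⊕ ⋯ ⊕ wᵏ` of a list of permutations. -/
def dsumList (l : List (Σ m : ℕ, Equiv.Perm (Fin m))) : Σ m : ℕ, Equiv.Perm (Fin m) :=
  l.foldr dsumSig ⟨0, 1⟩

/-- `w` is decomposable if it maps `{0,…,k-1}` onto itself for some `0 < k < n`. -/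
def Decomposable {n : ℕ} (w : Equiv.Perm (Fin n)) : Prop :=
  ∃ k : ℕ, 0 < k ∧ k < n ∧ ∀ i : Fin n, (i : ℕ) < k → ((w i : ℕ)) < k

/-- The Lehmer code of `w`. -/
def lehmer {n : ℕ} (w : Equiv.Perm (Fin n)) (i : Fin n) : ℕ :=
  (Finset.univ.filter fun j : Fin n => i < j ∧ w j < w i).card

/-- The cells of the Young diagram of `lam`. -/
def yCells {m : ℕ} (lam : Fin m → ℕ) : Set (Fin m × ℕ) :=
  {c | c.2 < lam c.1}

/-- A standard Young tableau of shape `lam`. -/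
def IsSYT {m : ℕ} (lam : Fin m → ℕ) (T : Fin m × ℕ → ℕ) : Prop :=
  Set.BijOn T (yCells lam) (Set.Icc 1 (∑ i, lam i)) ∧
  (∀ c, c ∉ yCells lam → T c = 0) ∧
  (∀ c ∈ yCells lam, ∀ c' ∈ yCells lam, c.1 = c'.1 → c.2 < c'.2 → T c < T c') ∧
  (∀ c ∈ yCells lam, ∀ c' ∈ yCells lam, c.2 = c'.2 → c.1 < c'.1 → T c < T c')

/-- `f^λ`: the number of standard Young tableaux of shape `lam`. -/
noncomputable def sytCard {m : ℕ} (lam : Fin m → ℕ) : ℕ :=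
  Nat.card {T : Fin m × ℕ → ℕ // IsSYT lam T}


/-!
A standard Rothe tableau of `w` is the same as a bijection `D(w) ≃ {1, …, ℓ(w)}` increasing
along rows and columns. The diagram of `u ⊕ v` is the disjoint union of the diagram of `u` and a
translate of that of `v`, and no row or column meets both, so the constraints decouple. An
increasing bijection on the union is then determined by the set `S` of labels given to `D(u)`
(any `ℓ(u)`-subset of `{1, …, ℓ(u) + ℓ(v)}`) together with the increasing bijections obtained
by compressing the labels on each block order-preservingly.
-/

section Labelling

variable {α β : Type*}

abbrev StdLabelling (r : α → α → Prop) (n : ℕ) : Type _ :=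
  {e : α ≃ Fin n // ∀ x y, r x y → e x < e y}

theorem RelIso.card_stdLabelling_congr {r : α → α → Prop} {s : β → β → Prop} (φ : r ≃r s)
    (n : ℕ) : Nat.card (StdLabelling r n) = Nat.card (StdLabelling s n) :=
  Nat.card_congr <| (φ.toEquiv.equivCongr (Equiv.refl _)).subtypeEquiv fun e => by
    simp only [Equiv.equivCongr_apply_apply, Equiv.refl_apply]
    refine ⟨fun h x y hxy => h _ _ (φ.symm.map_rel_iff.2 hxy), fun h x y hxy => ?_⟩
    simpa only [Equiv.symm_apply_apply] using h (φ.toEquiv x) (φ.toEquiv y) (φ.map_rel_iff.2 hxy)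

end Labelling

section Shuffle

variable {α β : Type*} {a b : ℕ}

theorem Fin.card_subtype_notMem_of_card_eq {S : Finset (Fin (a + b))} (hS : S.card = a) :
    Fintype.card {x // x ∉ S} = b := by
  simp [Fintype.card_subtype_compl, hS]

abbrev ShuffleData (α β : Type*) (a b : ℕ) : Type _ :=
  {S : Finset (Fin (a + b)) // S.card = a} × (α ≃ Fin a) × (β ≃ Fin b)

noncomputable def shuffle (t : ShuffleData α β a b) : α ⊕ β ≃ Fin (a + b) :=
  (Equiv.sumCongr (t.2.1.trans (t.1.1.orderIsoOfFin t.1.2).toEquiv)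
    (t.2.2.trans (Fintype.orderIsoFinOfCardEq _
      (Fin.card_subtype_notMem_of_card_eq t.1.2)).toEquiv)).trans
    (Equiv.sumCompl (· ∈ t.1.1))

variable {t : ShuffleData α β a b}

theorem shuffle_inl (x : α) : shuffle t (.inl x) = t.1.1.orderIsoOfFin t.1.2 (t.2.1 x) := rfl

theorem shuffle_inr (y : β) :
    shuffle t (.inr y) =
      Fintype.orderIsoFinOfCardEq _ (Fin.card_subtype_notMem_of_card_eq t.1.2) (t.2.2 y) := rfl

theorem mem_iff_isLeft_shuffle_symm (i : Fin (a + b)) :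
    i ∈ t.1.1 ↔ ((shuffle t).symm i).isLeft := by
  obtain ⟨z, rfl⟩ := (shuffle t).surjective i
  rw [Equiv.symm_apply_apply]
  rcases z with x | y
  · simp [shuffle_inl]
  · simpa [shuffle_inr] using (Fintype.orderIsoFinOfCardEq {x // x ∉ t.1.1} _ (t.2.2 y)).2

theorem shuffle_injective : Function.Injective (shuffle : ShuffleData α β a b → _) := by
  rintro ⟨⟨S, hS⟩, eα, eβ⟩ ⟨⟨S', hS'⟩, eα', eβ'⟩ h
  obtain rfl : S = S' := by
    ext i
    rw [mem_iff_isLeft_shuffle_symm (t := (⟨S, hS⟩, eα, eβ)), h, ← mem_iff_isLeft_shuffle_symm]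
  refine Prod.ext rfl (Prod.ext (Equiv.ext fun x => ?_) (Equiv.ext fun y => ?_))
  · simpa [shuffle_inl] using congrArg (· (.inl x)) h
  · have hy := congrArg (· (.inr y)) h
    simp only [shuffle_inr] at hy
    exact (OrderIso.injective _) (Subtype.ext hy)

theorem shuffle_bijective [Fintype α] [Fintype β] (ha : Fintype.card α = a)
    (hb : Fintype.card β = b) : Function.Bijective (shuffle : ShuffleData α β a b → _) := by
  classical
  -- both sides have `(a + b)! = C(a + b, a) * a! * b!` elements
  refine (Fintype.bijective_iff_injective_and_card _).2 ⟨shuffle_injective, ?_⟩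
  rw [Fintype.card_prod, Fintype.card_prod, Fintype.card_finset_len, Fintype.card_fin,
    Fintype.card_equiv (Fintype.equivFinOfCardEq ha),
    Fintype.card_equiv (Fintype.equivFinOfCardEq hb),
    Fintype.card_equiv (Fintype.equivFinOfCardEq (by simp [ha, hb])), Fintype.card_sum, ha, hb,
    ← mul_assoc, Nat.choose_symm_add, Nat.add_choose_mul_factorial_mul_factorial]

theorem shuffle_inl_lt_inl_iff {x x' : α} :
    shuffle t (.inl x) < shuffle t (.inl x') ↔ t.2.1 x < t.2.1 x' := by
  rw [shuffle_inl, shuffle_inl, Subtype.coe_lt_coe, OrderIso.lt_iff_lt]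

theorem shuffle_inr_lt_inr_iff {y y' : β} :
    shuffle t (.inr y) < shuffle t (.inr y') ↔ t.2.2 y < t.2.2 y' := by
  rw [shuffle_inr, shuffle_inr, Subtype.coe_lt_coe, OrderIso.lt_iff_lt]

theorem shuffle_liftRel_lt_iff {r : α → α → Prop} {s : β → β → Prop} :
    (∀ z w, Sum.LiftRel r s z w → shuffle t z < shuffle t w) ↔
      (∀ x x', r x x' → t.2.1 x < t.2.1 x') ∧ (∀ y y', s y y' → t.2.2 y < t.2.2 y') := by
  refine ⟨fun h => ⟨fun x x' hx => ?_, fun y y' hy => ?_⟩, ?_⟩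
  · exact shuffle_inl_lt_inl_iff.1 (h _ _ (.inl hx))
  · exact shuffle_inr_lt_inr_iff.1 (h _ _ (.inr hy))
  · rintro ⟨hα, hβ⟩ _ _ (⟨hx⟩ | ⟨hy⟩)
    · exact shuffle_inl_lt_inl_iff.2 (hα _ _ hx)
    · exact shuffle_inr_lt_inr_iff.2 (hβ _ _ hy)

theorem card_stdLabelling_liftRel [Fintype α] [Fintype β] (ha : Fintype.card α = a)
    (hb : Fintype.card β = b) (r : α → α → Prop) (s : β → β → Prop) :
    Nat.card (StdLabelling (Sum.LiftRel r s) (a + b)) =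
      (a + b).choose a * Nat.card (StdLabelling r a) * Nat.card (StdLabelling s b) := by
  let F : {S : Finset (Fin (a + b)) // S.card = a} × StdLabelling r a × StdLabelling s b →
      StdLabelling (Sum.LiftRel r s) (a + b) := fun t =>
    ⟨shuffle (t.1, t.2.1.1, t.2.2.1), shuffle_liftRel_lt_iff.2 ⟨t.2.1.2, t.2.2.2⟩⟩
  have hF : Function.Bijective F := by
    refine ⟨fun t t' h => ?_, fun e => ?_⟩
    · have := (shuffle_bijective ha hb).1 (congrArg Subtype.val h)
      simp only [Prod.mk.injEq] at this
      exact Prod.ext this.1 (Prod.ext (Subtype.ext this.2.1) (Subtype.ext this.2.2))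
    · obtain ⟨⟨S, eα, eβ⟩, he⟩ := (shuffle_bijective ha hb).2 e.1
      have hmono := shuffle_liftRel_lt_iff.1 (he ▸ e.2)
      exact ⟨⟨S, ⟨eα, hmono.1⟩, ⟨eβ, hmono.2⟩⟩, Subtype.ext he⟩
  rw [← Nat.card_congr (Equiv.ofBijective F hF), Nat.card_prod, Nat.card_prod,
    Nat.card_eq_fintype_card (α := {S : Finset _ // _}), Fintype.card_finset_len,
    Fintype.card_fin, mul_assoc]

end Shuffle

section FinsetLabelling

variable {γ : Type*} {r : γ → γ → Prop} {D : Finset γ} {n : ℕ} {T : γ → ℕ}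

def IsStdLabellingOn (r : γ → γ → Prop) (D : Finset γ) (n : ℕ) (T : γ → ℕ) : Prop :=
  Set.BijOn T D (Set.Icc 1 n) ∧ (∀ c, c ∉ D → T c = 0) ∧
    ∀ c ∈ D, ∀ d ∈ D, r c d → T c < T d

namespace IsStdLabellingOn

theorem one_le (hT : IsStdLabellingOn r D n T) {c : γ} (hc : c ∈ D) : 1 ≤ T c :=
  (hT.1.mapsTo hc).1

theorem sub_one_lt (hT : IsStdLabellingOn r D n T) {c : γ} (hc : c ∈ D) : T c - 1 < n := by
  have := hT.1.mapsTo hc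
  simp only [Set.mem_Icc] at this
  omega

def toFin (hT : IsStdLabellingOn r D n T) (c : D) : Fin n :=
  ⟨T c - 1, hT.sub_one_lt c.2⟩

theorem bijective_toFin (hT : IsStdLabellingOn r D n T) : Function.Bijective hT.toFin := by
  refine ⟨fun c d h => Subtype.ext (hT.1.injOn c.2 d.2 ?_), fun i => ?_⟩
  · have := congrArg Fin.val h
    have := hT.one_le c.2
    have := hT.one_le d.2
    simp only [toFin] at *
    omega
  · obtain ⟨c, hc, hci⟩ := hT.1.surjOn (show i.1 + 1 ∈ Set.Icc 1 n by simp [Nat.succ_le_of_lt i.2])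
    exact ⟨⟨c, hc⟩, Fin.ext (by simp [toFin, hci])⟩

end IsStdLabellingOn

theorem isStdLabellingOn_extend [DecidableEq γ] (e : StdLabelling (Subrel r (· ∈ D)) n) :
    IsStdLabellingOn r D n fun c => if h : c ∈ D then e.1 ⟨c, h⟩ + 1 else 0 := by
  refine ⟨⟨fun c hc => ?_, fun c hc d hd h => ?_, fun i hi => ?_⟩, fun c hc => dif_neg hc,
    fun c hc d hd hcd => ?_⟩
  · simp [dif_pos (Finset.mem_coe.1 hc), Nat.succ_le_of_lt (e.1 _).2]
  · simp only [dif_pos (Finset.mem_coe.1 hc), dif_pos (Finset.mem_coe.1 hd),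
      Nat.add_right_cancel_iff, Fin.val_inj, e.1.apply_eq_iff_eq, Subtype.mk.injEq] at h
    exact h
  · obtain ⟨h1, h2⟩ := hi
    refine ⟨e.1.symm ⟨i - 1, by omega⟩, (e.1.symm _).2, ?_⟩
    simp only [Subtype.coe_eta, (e.1.symm _).2, dif_pos, Equiv.apply_symm_apply]
    omega
  · simpa [dif_pos hc, dif_pos hd] using e.2 ⟨c, hc⟩ ⟨d, hd⟩ hcd

noncomputable def stdLabellingOnEquiv [DecidableEq γ] (r : γ → γ → Prop) (D : Finset γ) (n : ℕ) :
    {T // IsStdLabellingOn r D n T} ≃ StdLabelling (Subrel r (· ∈ D)) n where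
  toFun T := ⟨Equiv.ofBijective _ T.2.bijective_toFin, fun c d hcd => by
    have := T.2.one_le c.2
    have := T.2.2.2 c c.2 d d.2 hcd
    simp only [Equiv.ofBijective_apply, IsStdLabellingOn.toFin, Fin.mk_lt_mk]
    omega⟩
  invFun e := ⟨_, isStdLabellingOn_extend e⟩
  left_inv T := by
    ext c
    by_cases hc : c ∈ D
    · simp [dif_pos hc, IsStdLabellingOn.toFin, Nat.sub_add_cancel (T.2.one_le hc)]
    · simp [dif_neg hc, T.2.2.1 c hc]
  right_inv e := by
    ext c
    simp [IsStdLabellingOn.toFin]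

end FinsetLabelling

section RowCol

variable {α β γ : Type*}

def RowColLT [LT α] (c d : α × α) : Prop :=
  (c.1 = d.1 ∧ c.2 < d.2) ∨ (c.2 = d.2 ∧ c.1 < d.1)

theorem StrictMono.rowColLT_map_iff [LinearOrder α] [Preorder β] {f : α → β}
    (hf : StrictMono f) {c d : α × α} :
    RowColLT (Prod.map f f c) (Prod.map f f d) ↔ RowColLT c d := by
  simp only [RowColLT, Prod.map_fst, Prod.map_snd, hf.injective.eq_iff, hf.lt_iff_lt]

theorem not_rowColLT_map_of_ne [LT γ] {f : α → γ} {g : β → γ} (hfg : ∀ x y, f x ≠ g y)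
    (c : α × α) (d : β × β) : ¬ RowColLT (Prod.map f f c) (Prod.map g g d) := by
  rintro (⟨h, -⟩ | ⟨h, -⟩) <;> exact hfg _ _ h

end RowCol

theorem card_rothe {n : ℕ} (w : Equiv.Perm (Fin n)) : Fintype.card (rothe w) = plen w := by
  rw [Fintype.card_coe]
  symm
  refine Finset.card_bij (fun p _ => (p.1, w p.2)) ?_ ?_ ?_
  · rintro ⟨i, j⟩ hp
    simp only [Finset.mem_filter, Finset.mem_univ, true_and] at hp
    simpa [rothe] using ⟨hp.2, hp.1⟩
  · rintro ⟨i, j⟩ - ⟨i', j'⟩ - h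
    simp only [Prod.mk.injEq, EmbeddingLike.apply_eq_iff_eq] at h
    rw [h.1, h.2]
  · rintro ⟨i, j⟩ hc
    simp only [rothe, Finset.mem_filter, Finset.mem_univ, true_and] at hc
    exact ⟨(i, w⁻¹ j), by simpa using ⟨hc.2, hc.1⟩, by simp⟩

theorem isSRT_iff {n : ℕ} {w : Equiv.Perm (Fin n)} {T : Fin n × Fin n → ℕ} :
    IsSRT w T ↔ IsStdLabellingOn RowColLT (rothe w) (plen w) T := by
  simp only [IsSRT, IsStdLabellingOn, RowColLT]
  grind

theorem srtCard_eq_card_stdLabelling {n : ℕ} (w : Equiv.Perm (Fin n)) :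
    srtCard w = Nat.card (StdLabelling (Subrel RowColLT (· ∈ rothe w)) (plen w)) :=
  Nat.card_congr <| (Equiv.subtypeEquivRight fun _ => isSRT_iff).trans (stdLabellingOnEquiv _ _ _)

section DirectSum

variable {k m : ℕ} (u : Equiv.Perm (Fin k)) (v : Equiv.Perm (Fin m))

theorem dsum_castAdd (i : Fin k) : dsum u v (Fin.castAdd m i) = Fin.castAdd m (u i) := by
  simp [dsum, Equiv.permCongr_apply]

theorem dsum_natAdd (i : Fin m) : dsum u v (Fin.natAdd k i) = Fin.natAdd k (v i) := by
  simp [dsum, Equiv.permCongr_apply]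

theorem dsum_inv : (dsum u v)⁻¹ = dsum u⁻¹ v⁻¹ := by
  rw [inv_eq_iff_mul_eq_one]
  ext x
  induction x using Fin.addCases <;> simp [dsum_castAdd, dsum_natAdd]

theorem Fin.castAdd_lt_natAdd (i : Fin k) (j : Fin m) : Fin.castAdd m i < Fin.natAdd k j := by
  simp only [Fin.lt_def, Fin.val_castAdd, Fin.val_natAdd]
  omega

theorem castAdd_mem_rothe_dsum_iff {c : Fin k × Fin k} :
    Prod.map (Fin.castAdd m) (Fin.castAdd m) c ∈ rothe (dsum u v) ↔ c ∈ rothe u := by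
  simp [rothe, dsum_inv, dsum_castAdd, (Fin.strictMono_castAdd m).lt_iff_lt]

theorem natAdd_mem_rothe_dsum_iff {c : Fin m × Fin m} :
    Prod.map (Fin.natAdd k) (Fin.natAdd k) c ∈ rothe (dsum u v) ↔ c ∈ rothe v := by
  simp [rothe, dsum_inv, dsum_natAdd, (Fin.strictMono_natAdd k).lt_iff_lt]

theorem mem_rothe_dsum {c : Fin (k + m) × Fin (k + m)} (hc : c ∈ rothe (dsum u v)) :
    (∃ d ∈ rothe u, Prod.map (Fin.castAdd m) (Fin.castAdd m) d = c) ∨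
      ∃ d ∈ rothe v, Prod.map (Fin.natAdd k) (Fin.natAdd k) d = c := by
  obtain ⟨i, j⟩ := c
  induction i using Fin.addCases with
  | left i =>
    induction j using Fin.addCases with
    | left j => exact .inl ⟨(i, j), (castAdd_mem_rothe_dsum_iff u v).1 hc, rfl⟩
    | right j =>
      simp only [rothe, Finset.mem_filter, dsum_castAdd] at hc
      exact absurd hc.2.1 (Fin.castAdd_lt_natAdd _ _).not_gt
  | right i =>
    induction j using Fin.addCases with
    | left j =>
      simp only [rothe, Finset.mem_filter, dsum_inv, dsum_castAdd] at hc
      exact absurd hc.2.2 (Fin.castAdd_lt_natAdd _ _).not_gt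
    | right j => exact .inr ⟨(i, j), (natAdd_mem_rothe_dsum_iff u v).1 hc, rfl⟩

/-- No row or column meets both diagonal blocks of the Rothe diagram of `u ⊕ v`. -/
noncomputable def rotheDsumRelIso :
    Sum.LiftRel (Subrel RowColLT (· ∈ rothe u)) (Subrel RowColLT (· ∈ rothe v)) ≃r
      Subrel RowColLT (· ∈ rothe (dsum u v)) where
  toEquiv := Equiv.ofBijective
    (Sum.elim (fun c => ⟨_, (castAdd_mem_rothe_dsum_iff u v).2 c.2⟩)
      (fun c => ⟨_, (natAdd_mem_rothe_dsum_iff u v).2 c.2⟩)) <| by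
    have hinj {n l : ℕ} {f : Fin l → Fin n} (hf : StrictMono f) :
        Function.Injective (Prod.map f f) := hf.injective.prodMap hf.injective
    refine ⟨Function.Injective.sumElim ?_ ?_ fun c d h => ?_, fun c => ?_⟩
    · exact fun c d h => Subtype.ext (hinj (Fin.strictMono_castAdd m) (congrArg Subtype.val h))
    · exact fun c d h => Subtype.ext (hinj (Fin.strictMono_natAdd k) (congrArg Subtype.val h))
    · exact (Fin.castAdd_lt_natAdd c.1.1 d.1.1).ne (congrArg (·.1.1) h)
    · rcases mem_rothe_dsum u v c.2 with ⟨d, hd, hdc⟩ | ⟨d, hd, hdc⟩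
      · exact ⟨.inl ⟨d, hd⟩, Subtype.ext hdc⟩
      · exact ⟨.inr ⟨d, hd⟩, Subtype.ext hdc⟩
  map_rel_iff' := by
    have hne (i : Fin k) (j : Fin m) : Fin.castAdd m i ≠ Fin.natAdd k j :=
      (Fin.castAdd_lt_natAdd i j).ne
    rintro (c | c) (d | d)
    · rw [Sum.liftRel_inl_inl]
      exact (Fin.strictMono_castAdd m).rowColLT_map_iff
    · exact iff_of_false (not_rowColLT_map_of_ne hne _ _) Sum.not_liftRel_inl_inr
    · exact iff_of_false (not_rowColLT_map_of_ne (fun i j => (hne j i).symm) _ _)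
        Sum.not_liftRel_inr_inl
    · rw [Sum.liftRel_inr_inr]
      exact (Fin.strictMono_natAdd k).rowColLT_map_iff

end DirectSum

theorem plen_dsum {k m : ℕ} (u : Equiv.Perm (Fin k)) (v : Equiv.Perm (Fin m)) :
    plen (dsum u v) = plen u + plen v := by
  rw [← card_rothe, ← card_rothe, ← card_rothe, ← Fintype.card_sum,
    Fintype.card_congr (rotheDsumRelIso u v).toEquiv]

/-- `|SRT(u ⊕ v)| = C(ℓ(u)+ℓ(v), ℓ(u)) · |SRT(u)| · |SRT(v)|`. -/
theorem srtCard_dsum {k m : ℕ} (u : Equiv.Perm (Fin k)) (v : Equiv.Perm (Fin m)) :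
    srtCard (dsum u v)
      = Nat.choose (plen u + plen v) (plen u) * srtCard u * srtCard v := by
  rw [srtCard_eq_card_stdLabelling, plen_dsum, ← (rotheDsumRelIso u v).card_stdLabelling_congr,
    card_stdLabelling_liftRel (card_rothe u) (card_rothe v), srtCard_eq_card_stdLabelling,
    srtCard_eq_card_stdLabelling]
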